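/- arXiv:1205.6346 — 4 statements merged into one kernel-verified Lean document; each statement's English description precedes it below -/
import Mathlib

section
/- In every multiplayer quantitative reachability game (G, v₀), there exists a subgame perfect equilibrium, i.e. a strategy profile (σ_i)_{i∈Π} such that for every history hv of the game, the restricted profile (σ_i|_h) is a Nash equilibrium in the subgame (G|_h, v). -/
open scoped Classical ENat

/-- A multiplayer quantitative reachability game: a finite directed graph whose
vertices are partitioned among the players (via `owner`), every vertex has an
outgoing edge, and each player `i` has a nonempty goal set `F i`. -/
structure QRGame (ι V : Type) where
  owner : V → ι
  E : V → V → Prop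
  total : ∀ v, ∃ w, E v w
  F : ι → Set V
  F_ne : ∀ i, (F i).Nonempty

namespace QRGame

variable {ι V : Type}

/-- Histories are encoded as *reversed* nonempty lists: the head is the current
vertex, the last element is the initial vertex `v₀`, and consecutive elements
are joined by edges of the graph. -/
def IsHist (G : QRGame ι V) (v₀ : V) : List V → Prop
  | [] => False
  | [v] => v = v₀
  | v :: w :: t => G.E w v ∧ IsHist G v₀ (w :: t)

/-- The current (i.e. most recent) vertex of a history. -/
def cur (v₀ : V) (h : List V) : V := h.headD v₀

/-- `σ` is a valid strategy of player `i`: on every history whose current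
vertex belongs to player `i`, it chooses a successor along an edge. -/
def IsStrat (G : QRGame ι V) (v₀ : V) (i : ι) (σ : List V → V) : Prop :=
  ∀ h : List V, G.IsHist v₀ h → G.owner (cur v₀ h) = i → G.E (cur v₀ h) (σ h)

/-- A strategy profile: one valid strategy for each player. -/
def IsProfile (G : QRGame ι V) (v₀ : V) (σ : ι → List V → V) : Prop :=
  ∀ i, G.IsStrat v₀ i (σ i)

/-- The history reached after `n` further steps when all players follow the
profile `σ` from the history `h` on. -/
def histFrom (G : QRGame ι V) (v₀ : V) (σ : ι → List V → V) (h : List V) : ℕ → List V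
  | 0 => h
  | n + 1 =>
      σ (G.owner (cur v₀ (histFrom G v₀ σ h n))) (histFrom G v₀ σ h n)
        :: histFrom G v₀ σ h n

/-- The full play (indexed from time `0`) whose prefix is the history `h` and
which is consistent with the profile `σ` after `h`. -/
def fullPlay (G : QRGame ι V) (v₀ : V) (σ : ι → List V → V) (h : List V) (t : ℕ) : V :=
  (G.histFrom v₀ σ h t).reverse.getD t v₀

/-- The outcome `⟨(σ_i)⟩_{v₀}` of the profile `σ` from the initial vertex. -/
def outcome (G : QRGame ι V) (v₀ : V) (σ : ι → List V → V) : ℕ → V :=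
  G.fullPlay v₀ σ [v₀]

/-- Cost of player `i` for a play `ρ`: the least `l` with `ρ l ∈ F i`,
and `⊤` (i.e. `+∞`) if there is no such `l`. -/
noncomputable def cost (G : QRGame ι V) (i : ι) (ρ : ℕ → V) : ℕ∞ :=
  ⨅ l ∈ {l : ℕ | ρ l ∈ G.F i}, (l : ℕ∞)

/-- Cost of player `i` for the finite prefix `ρ₀ … ρ_{m-1}` of a play. -/
noncomputable def costLT (G : QRGame ι V) (i : ι) (ρ : ℕ → V) (m : ℕ) : ℕ∞ :=
  ⨅ l ∈ {l : ℕ | l < m ∧ ρ l ∈ G.F i}, (l : ℕ∞)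

end QRGame

namespace QRGame

variable {ι V : Type} [DecidableEq ι]

/-- `σ` restricted after the history `h` is a Nash equilibrium in the subgame
`(G|_h, cur h)`: no player `j` can strictly decrease his cost (computed on the
whole play, including the prefix `h`) by deviating after `h`. -/
def IsNashAfter (G : QRGame ι V) (v₀ : V) (σ : ι → List V → V) (h : List V) : Prop :=
  ∀ (j : ι) (σ' : List V → V), G.IsStrat v₀ j σ' →
    G.cost j (G.fullPlay v₀ σ h) ≤ G.cost j (G.fullPlay v₀ (Function.update σ j σ') h)

/-- A subgame perfect equilibrium: a Nash equilibrium in every subgame. -/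
def IsSPE (G : QRGame ι V) (v₀ : V) (σ : ι → List V → V) : Prop :=
  ∀ h : List V, G.IsHist v₀ h → G.IsNashAfter v₀ σ h

end QRGame

/-!
For every horizon `N`, backward induction yields a profile in which, after every history, no
player can lower his cost truncated at time `N` by deviating. Since `V` is finite, the moves of
these profiles converge along an ultrafilter on `ℕ`, and the limit profile agrees with profiles
of arbitrarily large horizon on all histories of bounded length. If a deviation after `h`
reaches `F j` at time `l`, pick such a profile of horizon `N > |h| + l` agreeing with the limit
on histories of length `≤ |h| + l`: the same deviation reaches `F j` at time `l` against it, so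
by truncated optimality its own play, hence also the limit play, reaches `F j` by time `l`.
-/

theorem List.IsPrefix.getD_eq {α : Type*} {l₁ l₂ : List α} (h : l₁ <+: l₂) {i : ℕ}
    (hi : i < l₁.length) (d : α) : l₁.getD i d = l₂.getD i d := by
  simp only [List.getD_eq_getElem?_getD, List.getElem?_eq_getElem hi,
    List.getElem?_eq_getElem (hi.trans_le h.length_le), h.getElem hi]

theorem ENat.biInf_coe_le_coe_iff (S : Set ℕ) (d : ℕ) :
    ⨅ l ∈ S, (l : ℕ∞) ≤ d ↔ ∃ l ∈ S, l ≤ d := by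
  refine ⟨fun h => ?_, fun ⟨l, hl, hld⟩ => (iInf₂_le l hl).trans (by exact_mod_cast hld)⟩
  by_contra! hS
  have : ((d + 1 : ℕ) : ℕ∞) ≤ ⨅ l ∈ S, (l : ℕ∞) :=
    le_iInf₂ fun l hl => by exact_mod_cast hS l hl
  have : d + 1 ≤ d := by exact_mod_cast this.trans h
  omega

theorem Ultrafilter.exists_eventually_eq {α β : Type*} [Finite β] (u : Ultrafilter α)
    (g : α → β) : ∃ b, ∀ᶠ x in u, g x = b := by
  obtain ⟨b, hb⟩ := (u.map g).eq_pure_of_finite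
  refine ⟨b, show g ⁻¹' {b} ∈ u from Ultrafilter.mem_map.1 ?_⟩
  rw [hb]
  exact Ultrafilter.mem_pure.2 rfl

namespace QRGame

variable {ι V : Type} {G : QRGame ι V} {v₀ : V}

theorem IsHist.ne_nil {h : List V} (hh : G.IsHist v₀ h) : h ≠ [] := by
  rintro rfl
  exact hh

theorem IsHist.cons {h : List V} (hh : G.IsHist v₀ h) {w : V} (hw : G.E (cur v₀ h) w) :
    G.IsHist v₀ (w :: h) := by
  cases h with
  | nil => exact hh.elim
  | cons _ _ => exact ⟨hw, hh⟩

theorem IsProfile.update [DecidableEq ι] {σ : ι → List V → V} (hσ : G.IsProfile v₀ σ)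
    {j : ι} {σ' : List V → V} (hσ' : G.IsStrat v₀ j σ') :
    G.IsProfile v₀ (Function.update σ j σ') := by
  intro i
  rcases eq_or_ne i j with rfl | hij
  · simpa using hσ'
  · simpa [Function.update_of_ne hij] using hσ i

section Cost

variable {i : ι} {ρ ρ' : ℕ → V}

theorem cost_le_cost_of_forall (h : ∀ l, ρ' l ∈ G.F i → ∃ l' ≤ l, ρ l' ∈ G.F i) :
    G.cost i ρ ≤ G.cost i ρ' :=
  le_iInf₂ fun l hl => (ENat.biInf_coe_le_coe_iff _ l).2 <| (h l hl).imp fun _ => And.symm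

theorem costLT_le_coe_iff {m d : ℕ} :
    G.costLT i ρ m ≤ d ↔ ∃ l < m, ρ l ∈ G.F i ∧ l ≤ d :=
  (ENat.biInf_coe_le_coe_iff _ d).trans (exists_congr fun _ => and_assoc)

theorem costLT_congr {m : ℕ} (hρ : ∀ l < m, ρ l = ρ' l) :
    G.costLT i ρ m = G.costLT i ρ' m := by
  have : {l | l < m ∧ ρ l ∈ G.F i} = {l | l < m ∧ ρ' l ∈ G.F i} :=
    Set.ext fun l => and_congr_right fun hl => by rw [hρ l hl]
  simp only [costLT, this]

end Cost

section Play

variable {σ : ι → List V → V} {h : List V}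

theorem length_histFrom (t : ℕ) : (G.histFrom v₀ σ h t).length = h.length + t := by
  induction t with
  | zero => rfl
  | succ t ih => simp only [histFrom, List.length_cons, ih, Nat.add_assoc]

theorem histFrom_suffix_histFrom {t t' : ℕ} (htt' : t ≤ t') :
    G.histFrom v₀ σ h t <:+ G.histFrom v₀ σ h t' := by
  induction t', htt' using Nat.le_induction with
  | base => exact List.suffix_refl _
  | succ t' _ ih => exact ih.trans (List.suffix_cons _ _)

theorem fullPlay_eq_getD (hne : h ≠ []) {s t : ℕ} (hs : s < h.length + t) :
    G.fullPlay v₀ σ h s = (G.histFrom v₀ σ h t).reverse.getD s v₀ := by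
  have hpos := List.length_pos_iff.mpr hne
  rcases le_total s t with hst | hts
  · exact (List.reverse_prefix.2 (histFrom_suffix_histFrom hst)).getD_eq
      (by simp only [List.length_reverse, length_histFrom]; omega) v₀
  · exact ((List.reverse_prefix.2 (histFrom_suffix_histFrom hts)).getD_eq
      (by simp only [List.length_reverse, length_histFrom]; omega) v₀).symm

theorem fullPlay_of_lt_length (hne : h ≠ []) {s : ℕ} (hs : s < h.length) :
    G.fullPlay v₀ σ h s = h.reverse.getD s v₀ :=
  fullPlay_eq_getD hne (t := 0) hs

theorem histFrom_cons_of_move {w : V} (hw : σ (G.owner (cur v₀ h)) h = w) (t : ℕ) :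
    G.histFrom v₀ σ (w :: h) t = G.histFrom v₀ σ h (t + 1) := by
  induction t with
  | zero => simp only [histFrom, hw]
  | succ t ih => rw [histFrom, ih]; rfl

theorem fullPlay_cons_of_move (hne : h ≠ []) {w : V} (hw : σ (G.owner (cur v₀ h)) h = w) :
    G.fullPlay v₀ σ (w :: h) = G.fullPlay v₀ σ h :=
  funext fun s => by
    rw [fullPlay, histFrom_cons_of_move hw, ← fullPlay_eq_getD hne (by omega)]

/-- The cost of a history `H`, read (reversed) as the prefix `H₀ … H_{|H|-1}` of a play. -/
noncomputable def histCost (G : QRGame ι V) (v₀ : V) (i : ι) (H : List V) : ℕ∞ :=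
  G.costLT i (fun t => H.reverse.getD t v₀) H.length

theorem costLT_fullPlay {i : ι} {N : ℕ} (hne : h ≠ []) (hN : h.length ≤ N) :
    G.costLT i (G.fullPlay v₀ σ h) N =
      G.histCost v₀ i (G.histFrom v₀ σ h (N - h.length)) := by
  rw [histCost, length_histFrom, Nat.add_sub_cancel' hN]
  exact costLT_congr fun l hl => fullPlay_eq_getD hne (by omega)

end Play

def AgreeUpTo (M : ℕ) (σ₁ σ₂ : ι → List V → V) : Prop :=
  ∀ i (l : List V), l.length ≤ M → σ₁ i l = σ₂ i l

namespace AgreeUpTo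

variable {M : ℕ} {σ₁ σ₂ : ι → List V → V}

theorem update [DecidableEq ι] (hσ : AgreeUpTo M σ₁ σ₂) (j : ι) (σ' : List V → V) :
    AgreeUpTo M (Function.update σ₁ j σ') (Function.update σ₂ j σ') := by
  intro i l hl
  rcases eq_or_ne i j with rfl | hij
  · simp
  · simpa [Function.update_of_ne hij] using hσ i l hl

theorem histFrom_eq (hσ : AgreeUpTo M σ₁ σ₂) {h : List V} {t : ℕ}
    (ht : h.length + t ≤ M + 1) :
    G.histFrom v₀ σ₁ h t = G.histFrom v₀ σ₂ h t := by
  induction t with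
  | zero => rfl
  | succ t ih =>
    rw [histFrom, histFrom, ih (by omega), hσ _ _ (by rw [length_histFrom]; omega)]

theorem fullPlay_eq (hσ : AgreeUpTo M σ₁ σ₂) {h : List V} {s : ℕ}
    (hs : h.length + s ≤ M + 1) :
    G.fullPlay v₀ σ₁ h s = G.fullPlay v₀ σ₂ h s := by
  rw [fullPlay, fullPlay, hσ.histFrom_eq hs]

end AgreeUpTo

section Nash

variable [DecidableEq ι]

def IsNashAfterUpTo (G : QRGame ι V) (v₀ : V) (σ : ι → List V → V) (h : List V) (N : ℕ) :
    Prop :=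
  ∀ (j : ι) (σ' : List V → V), G.IsStrat v₀ j σ' →
    G.costLT j (G.fullPlay v₀ σ h) N ≤
      G.costLT j (G.fullPlay v₀ (Function.update σ j σ') h) N

theorem isNashAfter_of_forall_agreeUpTo {σ : ι → List V → V} {h : List V}
    (hσ : ∀ M, ∃ N > M, ∃ τ, AgreeUpTo M τ σ ∧ G.IsNashAfterUpTo v₀ τ h N) :
    G.IsNashAfter v₀ σ h := by
  intro j σ' hσ'
  refine cost_le_cost_of_forall fun l hl => ?_
  obtain ⟨N, hN, τ, hτσ, hτ⟩ := hσ (h.length + l)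
  have hdev : G.fullPlay v₀ (Function.update τ j σ') h l ∈ G.F j := by
    rwa [(hτσ.update j σ').fullPlay_eq (by omega)]
  obtain ⟨l', -, hl', hl'l⟩ := costLT_le_coe_iff.1 <|
    (hτ j σ' hσ').trans <| costLT_le_coe_iff.2 ⟨l, by omega, hdev, le_rfl⟩
  exact ⟨l', hl'l, by rwa [← hτσ.fullPlay_eq (by omega)]⟩

end Nash

section BackwardInduction

noncomputable def argminSucc (G : QRGame ι V) (v : V) (f : V → ℕ∞) : V :=
  Function.argminOn f {w | G.E v w} (G.total v)

theorem edge_argminSucc (v : V) (f : V → ℕ∞) : G.E v (G.argminSucc v f) :=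
  Function.argminOn_mem f _ _

theorem argminSucc_le {v u : V} (f : V → ℕ∞) (hu : G.E v u) : f (G.argminSucc v f) ≤ f u :=
  Function.argminOn_le f {w | G.E v w} hu

/-- `backwardExtend k h` extends `h` by `k` moves, each mover choosing a successor that
minimises his cost at the end of the extension. -/
noncomputable def backwardExtend (G : QRGame ι V) (v₀ : V) : ℕ → List V → List V
  | 0, h => h
  | k + 1, h =>
      backwardExtend G v₀ k
        (G.argminSucc (cur v₀ h)
          (fun w => G.histCost v₀ (G.owner (cur v₀ h)) (backwardExtend G v₀ k (w :: h))) :: h)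

/-- The backward-induction move after `h` with `k` further moves to come. -/
noncomputable def backwardStep (G : QRGame ι V) (v₀ : V) (k : ℕ) (h : List V) : V :=
  G.argminSucc (cur v₀ h)
    (fun w => G.histCost v₀ (G.owner (cur v₀ h)) (G.backwardExtend v₀ k (w :: h)))

theorem backwardExtend_succ (k : ℕ) (h : List V) :
    G.backwardExtend v₀ (k + 1) h = G.backwardExtend v₀ k (G.backwardStep v₀ k h :: h) :=
  rfl

noncomputable def backwardStrat (G : QRGame ι V) (v₀ : V) (N : ℕ) (h : List V) : V :=
  G.backwardStep v₀ (N - h.length - 1) h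

variable {N : ℕ} {h : List V}

theorem edge_backwardStrat (N : ℕ) (h : List V) : G.E (cur v₀ h) (G.backwardStrat v₀ N h) :=
  edge_argminSucc _ _

theorem isProfile_backwardStrat : G.IsProfile v₀ fun _ => G.backwardStrat v₀ N :=
  fun _ h _ _ => edge_backwardStrat N h

theorem histFrom_backwardStrat {k : ℕ} (hk : h.length + k = N) :
    G.histFrom v₀ (fun _ => G.backwardStrat v₀ N) h k = G.backwardExtend v₀ k h := by
  induction k generalizing h with
  | zero => rfl
  | succ k ih =>
    have hmove : G.backwardStrat v₀ N h = G.backwardStep v₀ k h := by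
      rw [backwardStrat, show N - h.length - 1 = k by omega]
    rw [← histFrom_cons_of_move hmove, ih (by simp only [List.length_cons]; omega),
      backwardExtend_succ]

theorem costLT_backwardStrat_le (hne : h ≠ []) (hN : h.length < N) {u : V}
    (hu : G.E (cur v₀ h) u) :
    G.costLT (G.owner (cur v₀ h))
        (G.fullPlay v₀ (fun _ => G.backwardStrat v₀ N) h) N ≤
      G.costLT (G.owner (cur v₀ h))
        (G.fullPlay v₀ (fun _ => G.backwardStrat v₀ N) (u :: h)) N := by
  set k := N - h.length - 1
  have hvalue : ∀ w, G.costLT (G.owner (cur v₀ h))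
      (G.fullPlay v₀ (fun _ => G.backwardStrat v₀ N) (w :: h)) N =
        G.histCost v₀ (G.owner (cur v₀ h)) (G.backwardExtend v₀ k (w :: h)) := fun w => by
    have hk : N - (w :: h).length = k := by simp only [List.length_cons]; omega
    rw [costLT_fullPlay (List.cons_ne_nil w h) (by simp only [List.length_cons]; omega), hk,
      histFrom_backwardStrat (by simp only [List.length_cons]; omega)]
  rw [← fullPlay_cons_of_move hne (rfl : G.backwardStrat v₀ N h = G.backwardStep v₀ k h),
    hvalue, hvalue]
  exact argminSucc_le
    (fun w => G.histCost v₀ (G.owner (cur v₀ h)) (G.backwardExtend v₀ k (w :: h))) hu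

theorem isNashAfterUpTo_backwardStrat [DecidableEq ι] (hh : G.IsHist v₀ h) :
    G.IsNashAfterUpTo v₀ (fun _ => G.backwardStrat v₀ N) h N := by
  intro j σ' hσ'
  -- induction on a bound `k` for the number of moves left before the horizon
  obtain ⟨k, hk⟩ : ∃ k, N ≤ h.length + k := ⟨N, by omega⟩
  induction k generalizing h with
  | zero =>
    refine (costLT_congr fun l hl => ?_).le
    rw [fullPlay_of_lt_length hh.ne_nil (by omega), fullPlay_of_lt_length hh.ne_nil (by omega)]
  | succ k ih =>
    rcases le_or_gt N (h.length + k) with hNk | hNk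
    · exact ih hh hNk
    set σ : ι → List V → V := fun _ => G.backwardStrat v₀ N
    set w := Function.update σ j σ' (G.owner (cur v₀ h)) h
    have hw : G.E (cur v₀ h) w := isProfile_backwardStrat.update hσ' _ h hh rfl
    have hstep :
        G.costLT j (G.fullPlay v₀ σ h) N ≤ G.costLT j (G.fullPlay v₀ σ (w :: h)) N := by
      rcases eq_or_ne (G.owner (cur v₀ h)) j with rfl | hj
      · exact costLT_backwardStrat_le hh.ne_nil (by omega) hw
      · rw [fullPlay_cons_of_move hh.ne_nil (congrFun (Function.update_of_ne hj σ' σ) h).symm]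
    calc G.costLT j (G.fullPlay v₀ σ h) N
        ≤ G.costLT j (G.fullPlay v₀ σ (w :: h)) N := hstep
      _ ≤ G.costLT j (G.fullPlay v₀ (Function.update σ j σ') (w :: h)) N :=
        ih (hh.cons hw) (by simp only [List.length_cons]; omega)
      _ = G.costLT j (G.fullPlay v₀ (Function.update σ j σ') h) N := by
        rw [fullPlay_cons_of_move hh.ne_nil rfl]

end BackwardInduction

section Limit

variable [Finite V]

noncomputable def limitStrat (G : QRGame ι V) (v₀ : V) (h : List V) : V :=
  (Ultrafilter.exists_eventually_eq (Filter.hyperfilter ℕ)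
    fun N => G.backwardStrat v₀ N h).choose

theorem eventually_backwardStrat_eq_limitStrat (h : List V) :
    ∀ᶠ N in Filter.hyperfilter ℕ, G.backwardStrat v₀ N h = G.limitStrat v₀ h :=
  (Ultrafilter.exists_eventually_eq _ _).choose_spec

theorem edge_limitStrat (h : List V) : G.E (cur v₀ h) (G.limitStrat v₀ h) := by
  obtain ⟨N, hN⟩ := (eventually_backwardStrat_eq_limitStrat (G := G) (v₀ := v₀) h).exists
  exact hN ▸ edge_backwardStrat N h

variable (G v₀) in
theorem exists_agreeUpTo_limitStrat (M : ℕ) :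
    ∃ N > M, AgreeUpTo M (fun _ : ι => G.backwardStrat v₀ N) fun _ => G.limitStrat v₀ := by
  have hagree : ∀ᶠ N in Filter.hyperfilter ℕ,
      ∀ l ∈ {l : List V | l.length ≤ M}, G.backwardStrat v₀ N l = G.limitStrat v₀ l :=
    (Filter.eventually_all_finite (List.finite_length_le V M)).2 fun l _ =>
      eventually_backwardStrat_eq_limitStrat l
  have hlarge : ∀ᶠ N in Filter.hyperfilter ℕ, M < N :=
    (Filter.eventually_gt_atTop M).filter_mono Nat.hyperfilter_le_atTop
  obtain ⟨N, hMN, hN⟩ := (hlarge.and hagree).exists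
  exact ⟨N, hMN, fun _ l hl => hN l hl⟩

end Limit

end QRGame

theorem exists_subgame_perfect_equilibrium_general
    {ι V : Type} [Fintype V] [DecidableEq ι]
    (G : QRGame ι V) (v₀ : V) :
    ∃ σ : ι → List V → V, G.IsProfile v₀ σ ∧ G.IsSPE v₀ σ := by
  refine ⟨fun _ => G.limitStrat v₀, fun _ h _ _ => QRGame.edge_limitStrat h, fun h hh => ?_⟩
  refine QRGame.isNashAfter_of_forall_agreeUpTo fun M => ?_
  obtain ⟨N, hMN, hagree⟩ := G.exists_agreeUpTo_limitStrat v₀ M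
  exact ⟨N, hMN, _, hagree, QRGame.isNashAfterUpTo_backwardStrat hh⟩

/-- In every multiplayer quantitative reachability game, there exists a
subgame perfect equilibrium. -/
theorem exists_subgame_perfect_equilibrium
    {ι V : Type} [Fintype ι] [Fintype V] [DecidableEq ι]
    (G : QRGame ι V) (v₀ : V) :
    ∃ σ : ι → List V → V, G.IsProfile v₀ σ ∧ G.IsSPE v₀ σ :=
  exists_subgame_perfect_equilibrium_general G v₀
end

section
/- (Kuhn's theorem.) Let 𝒯 be a finite tree and 𝒢 a multiplayer quantitative reachability game played on 𝒯, and for each player i ∈ Π let ⪯_i be a preference relation (a total, reflexive, transitive binary relation) on cost profiles in (ℕ ∪ {+∞})^Π. Then there exists a strategy profile (σ_i)_{i∈Π} such that for every history hv of 𝒢, every player j ∈ Π, and every strategy σ'_j of player j, Cost(h⟨σ'_j|_h, σ_{-j}|_h⟩_v) ⪯_j Cost(h⟨(σ_i|_h)_{i∈Π}⟩_v). -/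
open scoped Classical ENat

/-- A multiplayer quantitative reachability game played on a finite tree.
The tree is given by its (finite) set of nodes, a root, and a parent function;
every node reaches the root by iterating `parent`.  Each node is owned by a
player, and each player `i` has a goal set `F i` of nodes. -/
structure TreeGame (ι N : Type) where
  root : N
  parent : N → N
  parent_root : parent root = root
  acc : ∀ n : N, ∃ k : ℕ, parent^[k] n = root
  owner : N → ι
  F : ι → Set N

namespace TreeGame

variable {ι N : Type}

/-- `c` is a child of `m` in the tree. -/
def IsChild (T : TreeGame ι N) (m c : N) : Prop := T.parent c = m ∧ c ≠ T.root

/-- A strategy of player `i`: to every node of player `i` that has a child, it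
assigns a child of that node.  (In a tree, histories correspond to nodes.) -/
def IsStrat (T : TreeGame ι N) (i : ι) (σ : N → N) : Prop :=
  ∀ n : N, T.owner n = i → (∃ c, T.IsChild n c) → T.IsChild n (σ n)

/-- One step of the play: at a non-leaf node, its owner moves according to the
profile `σ`; leaves are repeated forever. -/
noncomputable def step (T : TreeGame ι N) (σ : ι → N → N) (n : N) : N :=
  if ∃ c, T.IsChild n c then σ (T.owner n) n else n

/-- Depth of a node: the length of the path from the root to it. -/
noncomputable def depth (T : TreeGame ι N) (n : N) : ℕ := Nat.find (T.acc n)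

/-- The full play (from the root) going through the node `v` and following the
profile `σ` from `v` on: its first `depth v` steps follow the unique path from
the root to `v`, and afterwards it is consistent with `σ`. -/
noncomputable def playThrough (T : TreeGame ι N) (σ : ι → N → N) (v : N) (t : ℕ) : N :=
  if t ≤ T.depth v then T.parent^[T.depth v - t] v
  else (T.step σ)^[t - T.depth v] v

/-- Cost of player `i` for a play: the least `l` such that the `l`-th node of
the play is in `F i`, and `⊤` if there is no such `l`. -/
noncomputable def cost (T : TreeGame ι N) (i : ι) (ρ : ℕ → N) : ℕ∞ :=
  ⨅ l ∈ {l : ℕ | ρ l ∈ T.F i}, (l : ℕ∞)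

end TreeGame

/-!
Backward induction. The play through `v` depends only on the profile at nodes of depth at least
`depth v`, so the profile can be fixed layer by layer from the deepest one up: at a node of the
current layer, its owner moves to the child whose continuation, already an equilibrium of every
deeper subgame, it prefers most.
-/

lemma Set.Finite.exists_forall_rel_of_total {α β : Type*} {s : Set α} (hs : s.Finite)
    (hne : s.Nonempty) (f : α → β) {r : β → β → Prop} (htotal : ∀ x y, r x y ∨ r y x)
    (htrans : ∀ x y z, r x y → r y z → r x z) : ∃ m ∈ s, ∀ x ∈ s, r (f x) (f m) := by
  let _ : Preorder β :=
    { le := r, le_refl := fun x => (htotal x x).elim id id, le_trans := htrans }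
  obtain ⟨m, hm, hmax⟩ := Finite.exists_maximalFor f s hs hne
  exact ⟨m, hm, fun x hx => (htotal (f x) (f m)).elim id (hmax hx)⟩

namespace TreeGame

variable {ι N : Type} (T : TreeGame ι N)

lemma iterate_parent_depth (n : N) : T.parent^[T.depth n] n = T.root :=
  Nat.find_spec (T.acc n)

lemma depth_of_isChild {n c : N} (h : T.IsChild n c) : T.depth c = T.depth n + 1 := by
  refine (Nat.find_eq_iff (T.acc c)).mpr
    ⟨by rw [Function.iterate_succ_apply, h.1, T.iterate_parent_depth], ?_⟩
  rintro (_ | m) hm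
  · simpa using h.2
  · rw [Function.iterate_succ_apply, h.1]
    exact Nat.find_min (T.acc n) (show m < T.depth n by omega)

lemma exists_isStrat_profile : ∃ σ : ι → N → N, ∀ i, T.IsStrat i (σ i) :=
  ⟨fun _ n => if h : ∃ c, T.IsChild n c then h.choose else n,
    fun _ n _ h => by simpa only [dif_pos h] using h.choose_spec⟩

lemma isStrat_update [DecidableEq ι] {σ : ι → N → N} (hσ : ∀ i, T.IsStrat i (σ i)) {j : ι}
    {σj : N → N} (hσj : T.IsStrat j σj) (i : ι) : T.IsStrat i (Function.update σ j σj i) := by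
  rcases eq_or_ne i j with rfl | hij
  · simpa using hσj
  · simpa [Function.update_of_ne hij] using hσ i

variable {σ : ι → N → N}

lemma isChild_step (hσ : ∀ i, T.IsStrat i (σ i)) {n : N} (hn : ∃ c, T.IsChild n c) :
    T.IsChild n (T.step σ n) := by
  rw [step, if_pos hn]
  exact hσ _ n rfl hn

lemma depth_le_depth_iterate_step (hσ : ∀ i, T.IsStrat i (σ i)) (n : N) (k : ℕ) :
    T.depth n ≤ T.depth ((T.step σ)^[k] n) := by
  induction k with
  | zero => rfl
  | succ k ih =>
    rw [Function.iterate_succ_apply']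
    by_cases hw : ∃ c, T.IsChild ((T.step σ)^[k] n) c
    · rw [T.depth_of_isChild (T.isChild_step hσ hw)]
      omega
    · rwa [step, if_neg hw]

lemma playThrough_congr (hσ : ∀ i, T.IsStrat i (σ i)) {τ : ι → N → N} {v : N}
    (h : ∀ i n, T.depth v ≤ T.depth n → σ i n = τ i n) :
    T.playThrough σ v = T.playThrough τ v := by
  have hiter : ∀ k, (T.step σ)^[k] v = (T.step τ)^[k] v := by
    intro k
    induction k with
    | zero => rfl
    | succ k ih =>
      rw [Function.iterate_succ_apply', Function.iterate_succ_apply', ← ih, step, step,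
        h _ _ (T.depth_le_depth_iterate_step hσ v k)]
  funext t
  simp only [playThrough, hiter]

lemma playThrough_eq_playThrough_step (hσ : ∀ i, T.IsStrat i (σ i)) {v : N}
    (hv : ∃ c, T.IsChild v c) : T.playThrough σ v = T.playThrough σ (T.step σ v) := by
  have hc := T.isChild_step hσ hv
  funext t
  simp only [playThrough, T.depth_of_isChild hc]
  rcases lt_trichotomy t (T.depth v + 1) with h | rfl | h
  · rw [if_pos (by omega), if_pos h.le, show T.depth v + 1 - t = T.depth v - t + 1 by omega,
      Function.iterate_succ_apply, hc.1]
  · simp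
  · rw [if_neg (by omega), if_neg (by omega),
      show t - T.depth v = t - (T.depth v + 1) + 1 by omega, Function.iterate_succ_apply]

lemma playThrough_of_not_exists_isChild {v : N} (hv : ¬∃ c, T.IsChild v c)
    (σ τ : ι → N → N) : T.playThrough σ v = T.playThrough τ v := by
  have hfix : ∀ σ : ι → N → N, ∀ k, (T.step σ)^[k] v = v :=
    fun _ => Function.iterate_fixed (if_neg hv)
  funext t
  simp only [playThrough, hfix]

section BackwardInduction

variable {r : ι → (ℕ → N) → (ℕ → N) → Prop}

/-- `r j ρ ρ'` means that player `j` likes the play `ρ` at most as much as `ρ'`. -/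
def IsNashEquilibriumAt [DecidableEq ι] (r : ι → (ℕ → N) → (ℕ → N) → Prop) (σ : ι → N → N)
    (v : N) : Prop :=
  ∀ j σj, T.IsStrat j σj → r j (T.playThrough (Function.update σ j σj) v) (T.playThrough σ v)

lemma exists_best_child [Finite N] (htotal : ∀ j ρ ρ', r j ρ ρ' ∨ r j ρ' ρ)
    (htrans : ∀ j ρ₁ ρ₂ ρ₃, r j ρ₁ ρ₂ → r j ρ₂ ρ₃ → r j ρ₁ ρ₃) (σ : ι → N → N) :
    ∃ b : N → N, ∀ n, (∃ c, T.IsChild n c) → T.IsChild n (b n) ∧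
      ∀ c, T.IsChild n c → r (T.owner n) (T.playThrough σ c) (T.playThrough σ (b n)) := by
  have hb : ∀ n, ∃ b, (∃ c, T.IsChild n c) → T.IsChild n b ∧
      ∀ c, T.IsChild n c → r (T.owner n) (T.playThrough σ c) (T.playThrough σ b) := by
    intro n
    by_cases hn : ∃ c, T.IsChild n c
    · obtain ⟨b, hb, hmax⟩ := (Set.toFinite {c | T.IsChild n c}).exists_forall_rel_of_total hn
        (T.playThrough σ) (htotal _) (htrans _)
      exact ⟨b, fun _ => ⟨hb, hmax⟩⟩
    · exact ⟨n, fun h => absurd h hn⟩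
  choose b hb using hb
  exact ⟨b, hb⟩

variable [DecidableEq ι]

lemma IsNashEquilibriumAt.congr {σ' : ι → N → N} (hσ' : ∀ i, T.IsStrat i (σ' i)) {v : N}
    (h : ∀ i n, T.depth v ≤ T.depth n → σ' i n = σ i n) (hN : T.IsNashEquilibriumAt r σ v) :
    T.IsNashEquilibriumAt r σ' v := by
  intro j σj hσj
  rw [T.playThrough_congr (T.isStrat_update hσ' hσj) (τ := Function.update σ j σj)
      fun i n hn => by simp only [Function.update_apply]; split_ifs; exacts [rfl, h i n hn],
    T.playThrough_congr hσ' h]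
  exact hN j σj hσj

lemma isNashEquilibriumAt_of_not_exists_isChild (htotal : ∀ j ρ ρ', r j ρ ρ' ∨ r j ρ' ρ)
    {v : N} (hv : ¬∃ c, T.IsChild v c) : T.IsNashEquilibriumAt r σ v := fun j σj _ => by
  rw [T.playThrough_of_not_exists_isChild hv _ σ]
  exact (htotal j _ _).elim id id

/-- One-step deviation: a deviation of `j` at `v` is a first move followed by a deviation in the
subgame of a child, which does not help `j` there. -/
lemma isNashEquilibriumAt_of_forall_isChild (htotal : ∀ j ρ ρ', r j ρ ρ' ∨ r j ρ' ρ)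
    (htrans : ∀ j ρ₁ ρ₂ ρ₃, r j ρ₁ ρ₂ → r j ρ₂ ρ₃ → r j ρ₁ ρ₃) (hσ : ∀ i, T.IsStrat i (σ i))
    {v : N} (hv : ∃ c, T.IsChild v c) (hN : ∀ c, T.IsChild v c → T.IsNashEquilibriumAt r σ c)
    (hbest : ∀ c, T.IsChild v c →
      r (T.owner v) (T.playThrough σ c) (T.playThrough σ (T.step σ v))) :
    T.IsNashEquilibriumAt r σ v := by
  intro j σj hσj
  have hτ := T.isStrat_update hσ hσj
  have hc := T.isChild_step hτ hv
  have hmove : r j (T.playThrough σ (T.step (Function.update σ j σj) v))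
      (T.playThrough σ (T.step σ v)) := by
    rcases eq_or_ne (T.owner v) j with rfl | hj
    · exact hbest _ hc
    · rw [step, step, Function.update_of_ne hj]
      exact (htotal j _ _).elim id id
  rw [T.playThrough_eq_playThrough_step hτ hv, T.playThrough_eq_playThrough_step hσ hv]
  exact htrans j _ _ _ (hN _ hc j σj hσj) hmove

lemma exists_isNashEquilibriumAt_of_succ_le_depth [Finite N]
    (htotal : ∀ j ρ ρ', r j ρ ρ' ∨ r j ρ' ρ)
    (htrans : ∀ j ρ₁ ρ₂ ρ₃, r j ρ₁ ρ₂ → r j ρ₂ ρ₃ → r j ρ₁ ρ₃) (hσ : ∀ i, T.IsStrat i (σ i))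
    {d : ℕ} (hd : ∀ v, d + 1 ≤ T.depth v → T.IsNashEquilibriumAt r σ v) :
    ∃ σ' : ι → N → N, (∀ i, T.IsStrat i (σ' i)) ∧
      ∀ v, d ≤ T.depth v → T.IsNashEquilibriumAt r σ' v := by
  obtain ⟨b, hb⟩ := T.exists_best_child htotal htrans σ
  let σ' : ι → N → N := fun i n => if T.depth n = d then b n else σ i n
  have hσ' : ∀ i, T.IsStrat i (σ' i) := fun i n hn hc => by
    by_cases hnd : T.depth n = d
    · simpa only [σ', if_pos hnd] using (hb n hc).1
    · simpa only [σ', if_neg hnd] using hσ i n hn hc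
  have hdeep : ∀ v, d + 1 ≤ T.depth v → ∀ i n, T.depth v ≤ T.depth n → σ' i n = σ i n :=
    fun _ hv _ _ hn => if_neg (by omega)
  have hN : ∀ v, d + 1 ≤ T.depth v → T.IsNashEquilibriumAt r σ' v :=
    fun v hv => (hd v hv).congr T hσ' (hdeep v hv)
  refine ⟨σ', hσ', fun v hv => hv.eq_or_lt.elim (fun hvd => ?_) (hN v)⟩
  by_cases hleaf : ∃ c, T.IsChild v c
  · have hchild : ∀ c, T.IsChild v c → d + 1 ≤ T.depth c := fun c hc => by
      rw [T.depth_of_isChild hc, hvd]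
    have hbv : T.step σ' v = b v := by simp [step, hleaf, σ', ← hvd]
    refine T.isNashEquilibriumAt_of_forall_isChild htotal htrans hσ' hleaf
      (fun c hc => hN c (hchild c hc)) fun c hc => ?_
    rw [hbv, T.playThrough_congr hσ' (hdeep c (hchild c hc)),
      T.playThrough_congr hσ' (hdeep (b v) (hchild _ (hb v hleaf).1))]
    exact (hb v hleaf).2 c hc
  · exact T.isNashEquilibriumAt_of_not_exists_isChild htotal hleaf

theorem exists_forall_isNashEquilibriumAt [Fintype N] (htotal : ∀ j ρ ρ', r j ρ ρ' ∨ r j ρ' ρ)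
    (htrans : ∀ j ρ₁ ρ₂ ρ₃, r j ρ₁ ρ₂ → r j ρ₂ ρ₃ → r j ρ₁ ρ₃) :
    ∃ σ : ι → N → N, (∀ i, T.IsStrat i (σ i)) ∧ ∀ v, T.IsNashEquilibriumAt r σ v := by
  set H := Finset.univ.sup T.depth + 1
  have hH : ∀ v, T.depth v < H := fun v => Nat.lt_succ_of_le (Finset.le_sup (Finset.mem_univ v))
  have key : ∀ k, ∃ σ : ι → N → N, (∀ i, T.IsStrat i (σ i)) ∧
      ∀ v, H - k ≤ T.depth v → T.IsNashEquilibriumAt r σ v := by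
    intro k
    induction k with
    | zero =>
      obtain ⟨σ, hσ⟩ := T.exists_isStrat_profile
      exact ⟨σ, hσ, fun v hv => absurd (hH v) (by omega)⟩
    | succ k ih =>
      obtain ⟨σ, hσ, hN⟩ := ih
      exact T.exists_isNashEquilibriumAt_of_succ_le_depth htotal htrans hσ
        (d := H - (k + 1)) fun v hv => hN v (by omega)
  obtain ⟨σ, hσ, hN⟩ := key H
  exact ⟨σ, hσ, fun v => hN v (by omega)⟩

end BackwardInduction

end TreeGame

theorem kuhn_theorem_general
    {ι N : Type} [Fintype N] [DecidableEq ι]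
    (T : TreeGame ι N)
    (pref : ι → (ι → ℕ∞) → (ι → ℕ∞) → Prop)
    (htotal : ∀ j x y, pref j x y ∨ pref j y x)
    (htrans : ∀ j x y z, pref j x y → pref j y z → pref j x z) :
    ∃ σ : ι → N → N, (∀ i, T.IsStrat i (σ i)) ∧
      ∀ (v : N) (j : ι) (σ' : N → N), T.IsStrat j σ' →
        pref j (fun i => T.cost i (T.playThrough (Function.update σ j σ') v))
          (fun i => T.cost i (T.playThrough σ v)) :=
  T.exists_forall_isNashEquilibriumAt
    (r := fun j ρ ρ' => pref j (fun i => T.cost i ρ) (fun i => T.cost i ρ'))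
    (fun j _ _ => htotal j _ _) (fun j _ _ _ => htrans j _ _ _)

/-- Kuhn's theorem: in a multiplayer quantitative reachability game played on a
finite tree, for any family of preference relations `⪯_j` (total, reflexive and
transitive relations on cost profiles), there is a strategy profile `σ` such
that for every history (i.e. node) `v`, every player `j` and every deviation
`σ'` of player `j` after `v`, the resulting cost profile is `⪯_j` the cost
profile of the play through `v` following `σ`. -/
theorem kuhn_theorem
    {ι N : Type} [Fintype ι] [Fintype N] [DecidableEq ι]
    (T : TreeGame ι N)
    (pref : ι → (ι → ℕ∞) → (ι → ℕ∞) → Prop)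
    (htotal : ∀ j x y, pref j x y ∨ pref j y x)
    (hrefl : ∀ j x, pref j x x)
    (htrans : ∀ j x y z, pref j x y → pref j y z → pref j x z) :
    ∃ σ : ι → N → N, (∀ i, T.IsStrat i (σ i)) ∧
      ∀ (v : N) (j : ι) (σ' : N → N), T.IsStrat j σ' →
        pref j (fun i => T.cost i (T.playThrough (Function.update σ j σ') v))
          (fun i => T.cost i (T.playThrough σ v)) :=
  kuhn_theorem_general T pref htotal htrans
end

section
/- Let 𝒢 = (V, V₁, V₂, E, c) be a qualitative two-player zero-sum weak parity game. Then for every vertex v ∈ V, one of the two players has a memoryless winning strategy from v; in particular, 𝒢 is determined. -/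
open scoped Classical

/-- A qualitative two-player zero-sum weak parity game: a finite directed graph
whose vertices are partitioned between player 1 (`owner v = true`) and player 2
(`owner v = false`), every vertex has an outgoing edge, and `c` is a coloring
function. -/
structure WPGame (V : Type) where
  owner : V → Bool
  E : V → V → Prop
  total : ∀ v, ∃ w, E v w
  c : V → ℕ

namespace WPGame

variable {V : Type}

/-- `ρ` is a play from `v`. -/
def IsPlay (G : WPGame V) (v : V) (ρ : ℕ → V) : Prop :=
  ρ 0 = v ∧ ∀ k, G.E (ρ k) (ρ (k + 1))

/-- The maximal color occurring along the play `ρ`. -/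
noncomputable def maxColor (G : WPGame V) (ρ : ℕ → V) : ℕ :=
  sSup (Set.range fun k => G.c (ρ k))

/-- Player 1 wins the play `ρ` iff the maximal color seen along `ρ` is even
(otherwise player 2 wins it). -/
def Wins1 (G : WPGame V) (ρ : ℕ → V) : Prop := Even (G.maxColor ρ)

/-- `f` is a valid memoryless strategy (it moves along edges). -/
def MLValid (G : WPGame V) (f : V → V) : Prop := ∀ v, G.E v (f v)

/-- The play `ρ` is consistent with the memoryless strategy `f` of the player
`p` (`p = true` is player 1, `p = false` is player 2). -/
def ConsistentML (G : WPGame V) (p : Bool) (f : V → V) (ρ : ℕ → V) : Prop :=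
  ∀ k, G.owner (ρ k) = p → ρ (k + 1) = f (ρ k)

end WPGame

/-!
Induction on a strict bound `n + 1` for the colors of a subarena `U`. Let `p` be the player
favoured by the parity of `n`. From the `p`-attractor `A` of the vertices of color `n`, player `p`
forces a visit to color `n`, which is then the maximal color of the play. The rest `U \ A` is a
subarena that `p` cannot leave towards `A` and whose colors are below `n`, so by induction it is
solved by memoryless strategies. Gluing these with the rank-decreasing attractor strategy solves
`U`: the opponent's strategy keeps the play inside `U \ A`, and `p`'s strategy either stays there
or enters `A` and then reaches color `n`.
-/

namespace WPGame

variable {V : Type} {G : WPGame V}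

noncomputable def winner (G : WPGame V) (ρ : ℕ → V) : Bool := decide (G.Wins1 ρ)

theorem maxColor_eq {ρ : ℕ → V} {n : ℕ} (hle : ∀ k, G.c (ρ k) ≤ n) {j : ℕ}
    (hj : G.c (ρ j) = n) : G.maxColor ρ = n :=
  IsGreatest.csSup_eq ⟨⟨j, hj⟩, by rintro _ ⟨k, rfl⟩; exact hle k⟩

theorem ConsistentML.of_piecewise {q : Bool} {S : Set V} [∀ v, Decidable (v ∈ S)]
    {f g : V → V} {ρ : ℕ → V} (h : G.ConsistentML q (S.piecewise f g) ρ)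
    (hS : ∀ k, ρ k ∈ S) : G.ConsistentML q f ρ :=
  fun k hk => (h k hk).trans (S.piecewise_eq_of_mem f g (hS k))

def NoDeadEnds (G : WPGame V) (U : Set V) : Prop := ∀ v ∈ U, ∃ w, G.E v w ∧ w ∈ U

/-- The vertices of `U` from which player `p` can force the next vertex into `X`, if it stays
in `U`. -/
def cpre (G : WPGame V) (p : Bool) (U X : Set V) : Set V :=
  {v | v ∈ U ∧ ((G.owner v = p ∧ ∃ w, G.E v w ∧ w ∈ X) ∨
    (G.owner v ≠ p ∧ ∀ w ∈ U, G.E v w → w ∈ X))}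

def attrStep (G : WPGame V) (p : Bool) (U T : Set V) : ℕ → Set V
  | 0 => T ∩ U
  | m + 1 => G.attrStep p U T m ∪ G.cpre p U (G.attrStep p U T m)

def attr (G : WPGame V) (p : Bool) (U T : Set V) : Set V := ⋃ m, G.attrStep p U T m

noncomputable def rank (G : WPGame V) (p : Bool) (U T : Set V) (v : V) : ℕ :=
  sInf {m | v ∈ G.attrStep p U T m}

section Attractor

variable {p : Bool} {U T : Set V} {v w : V}

theorem attrStep_mono : Monotone (G.attrStep p U T) :=
  monotone_nat_of_le_succ fun _ => Set.subset_union_left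

theorem attrStep_subset : ∀ m, G.attrStep p U T m ⊆ U
  | 0 => Set.inter_subset_right
  | _ + 1 => Set.union_subset (attrStep_subset _) fun _ hv => hv.1

theorem attr_subset : G.attr p U T ⊆ U :=
  Set.iUnion_subset attrStep_subset

theorem mem_attr (hT : v ∈ T) (hU : v ∈ U) : v ∈ G.attr p U T :=
  Set.mem_iUnion.2 ⟨0, hT, hU⟩

theorem mem_attrStep_rank (hv : v ∈ G.attr p U T) : v ∈ G.attrStep p U T (G.rank p U T v) :=
  Nat.sInf_mem (Set.mem_iUnion.1 hv)

theorem rank_le {m : ℕ} (hv : v ∈ G.attrStep p U T m) : G.rank p U T v ≤ m :=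
  Nat.sInf_le hv

theorem mem_cpre_of_mem_attr (hv : v ∈ G.attr p U T) (hT : v ∉ T) :
    ∃ m, G.rank p U T v = m + 1 ∧ v ∈ G.cpre p U (G.attrStep p U T m) := by
  have hmem := mem_attrStep_rank hv
  obtain ⟨m, hm⟩ : ∃ m, G.rank p U T v = m + 1 := by
    refine Nat.exists_eq_add_one.2 (Nat.pos_of_ne_zero fun h0 => hT ?_)
    rw [h0] at hmem
    exact hmem.1
  rw [hm] at hmem
  exact ⟨m, hm, hmem.resolve_left fun h => absurd (rank_le h) (by omega)⟩

theorem exists_rank_lt_of_owner_eq (hv : v ∈ G.attr p U T) (hT : v ∉ T) (hp : G.owner v = p) :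
    ∃ w, G.E v w ∧ w ∈ G.attr p U T ∧ G.rank p U T w < G.rank p U T v := by
  obtain ⟨m, hm, -, hcpre⟩ := mem_cpre_of_mem_attr hv hT
  obtain ⟨w, hE, hw⟩ := (hcpre.resolve_right fun h => h.1 hp).2
  exact ⟨w, hE, Set.mem_iUnion.2 ⟨m, hw⟩, hm ▸ Nat.lt_succ_of_le (rank_le hw)⟩

theorem rank_lt_of_owner_ne (hv : v ∈ G.attr p U T) (hT : v ∉ T) (hp : G.owner v ≠ p)
    (hw : w ∈ U) (hE : G.E v w) : w ∈ G.attr p U T ∧ G.rank p U T w < G.rank p U T v := by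
  obtain ⟨m, hm, -, hcpre⟩ := mem_cpre_of_mem_attr hv hT
  have hw' := (hcpre.resolve_left fun h => hp h.1).2 w hw hE
  exact ⟨Set.mem_iUnion.2 ⟨m, hw'⟩, hm ▸ Nat.lt_succ_of_le (rank_le hw')⟩

theorem mem_attr_of_owner_eq (hv : v ∈ U) (hp : G.owner v = p) (hE : G.E v w)
    (hw : w ∈ G.attr p U T) : v ∈ G.attr p U T := by
  obtain ⟨m, hm⟩ := Set.mem_iUnion.1 hw
  exact Set.mem_iUnion.2 ⟨m + 1, Or.inr ⟨hv, Or.inl ⟨hp, w, hE, hm⟩⟩⟩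

theorem mem_attr_of_owner_ne [Finite V] (hv : v ∈ U) (hp : G.owner v ≠ p)
    (h : ∀ w ∈ U, G.E v w → w ∈ G.attr p U T) : v ∈ G.attr p U T := by
  obtain ⟨M, hM⟩ := (Set.finite_range (G.rank p U T)).bddAbove
  have hstep : ∀ w ∈ U, G.E v w → w ∈ G.attrStep p U T M := fun w hw hE =>
    attrStep_mono (hM ⟨w, rfl⟩) (mem_attrStep_rank (h w hw hE))
  exact Set.mem_iUnion.2 ⟨M + 1, Or.inr ⟨hv, Or.inr ⟨hp, hstep⟩⟩⟩

theorem NoDeadEnds.diff_attr [Finite V] (hU : G.NoDeadEnds U) :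
    G.NoDeadEnds (U \ G.attr p U T) := by
  rintro v ⟨hvU, hvA⟩
  by_cases hp : G.owner v = p
  · obtain ⟨w, hE, hw⟩ := hU v hvU
    exact ⟨w, hE, hw, fun hwA => hvA (mem_attr_of_owner_eq hvU hp hE hwA)⟩
  · by_contra! h
    exact hvA (mem_attr_of_owner_ne hvU hp fun w hw hE => by_contra fun hwA => h w hE ⟨hw, hwA⟩)

def IsAttrStrategy (G : WPGame V) (p : Bool) (U T : Set V) (σ : V → V) : Prop :=
  ∀ v ∈ G.attr p U T, G.owner v = p → v ∉ T →
    σ v ∈ G.attr p U T ∧ G.rank p U T (σ v) < G.rank p U T v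

theorem exists_attrStrategy (hU : G.NoDeadEnds U) :
    ∃ σ, G.MLValid σ ∧ Set.MapsTo σ U U ∧ G.IsAttrStrategy p U T σ := by
  have hmove : ∀ v, ∃ w, G.E v w ∧ (v ∈ U → w ∈ U) ∧ (v ∈ G.attr p U T → G.owner v = p →
      v ∉ T → w ∈ G.attr p U T ∧ G.rank p U T w < G.rank p U T v) := by
    intro v
    by_cases hdesc : v ∈ G.attr p U T ∧ G.owner v = p ∧ v ∉ T
    · obtain ⟨w, hE, hw, hlt⟩ := exists_rank_lt_of_owner_eq hdesc.1 hdesc.2.2 hdesc.2.1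
      exact ⟨w, hE, fun _ => attr_subset hw, fun _ _ _ => ⟨hw, hlt⟩⟩
    by_cases hv : v ∈ U
    · obtain ⟨w, hE, hw⟩ := hU v hv
      exact ⟨w, hE, fun _ => hw, fun h1 h2 h3 => absurd ⟨h1, h2, h3⟩ hdesc⟩
    · obtain ⟨w, hE⟩ := G.total v
      exact ⟨w, hE, fun h => absurd h hv, fun h => absurd (attr_subset h) hv⟩
  choose σ hE hU hdesc using hmove
  exact ⟨σ, hE, hU, hdesc⟩

theorem IsAttrStrategy.exists_mem {σ : V → V} (hσ : G.IsAttrStrategy p U T σ) {ρ : ℕ → V}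
    (hρ : ∀ k, G.E (ρ k) (ρ (k + 1))) (hρU : ∀ k, ρ k ∈ U) (hcons : G.ConsistentML p σ ρ)
    {k : ℕ} (hk : ρ k ∈ G.attr p U T) : ∃ j, ρ j ∈ T := by
  induction hr : G.rank p U T (ρ k) using Nat.strong_induction_on generalizing k with
  | _ r ih =>
    by_cases hT : ρ k ∈ T
    · exact ⟨k, hT⟩
    have hnext : ρ (k + 1) ∈ G.attr p U T ∧ G.rank p U T (ρ (k + 1)) < G.rank p U T (ρ k) := by
      by_cases hp : G.owner (ρ k) = p
      · rw [hcons k hp]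
        exact hσ _ hk hp hT
      · exact rank_lt_of_owner_ne hk hT hp (hρU _) (hρ k)
    exact ih _ (hr ▸ hnext.2) hnext.1 rfl

theorem forall_mem_diff_attr {q : Bool} (hqp : q ≠ p) {g : V → V}
    (hg : Set.MapsTo g (U \ G.attr p U T) (U \ G.attr p U T)) {ρ : ℕ → V}
    (hρ : ∀ k, G.E (ρ k) (ρ (k + 1))) (hρU : ∀ k, ρ k ∈ U) (h0 : ρ 0 ∈ U \ G.attr p U T)
    (hcons : G.ConsistentML q g ρ) : ∀ k, ρ k ∈ U \ G.attr p U T := by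
  refine Nat.rec h0 fun k hk => ?_
  by_cases hown : G.owner (ρ k) = p
  · exact ⟨hρU _, fun hA => hk.2 (mem_attr_of_owner_eq hk.1 hown (hρ k) hA)⟩
  · rw [hcons k ((Bool.eq_not_of_ne hown).trans (Bool.eq_not_of_ne hqp).symm)]
    exact hg hk

end Attractor

def WinsFrom (G : WPGame V) (U : Set V) (q : Bool) (f : V → V) (v : V) : Prop :=
  ∀ ρ, G.IsPlay v ρ → (∀ k, ρ k ∈ U) → G.ConsistentML q f ρ → G.winner ρ = q

structure SolvedBy (G : WPGame V) (U : Set V) (f : Bool → V → V) : Prop where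
  valid : ∀ q, G.MLValid (f q)
  mapsTo : ∀ q, Set.MapsTo (f q) U U
  winsFrom : ∀ v ∈ U, ∃ q, G.WinsFrom U q (f q) v

theorem SolvedBy.piecewise_attr {p : Bool} {U T : Set V} {σ : V → V} {f : Bool → V → V}
    (hT : ∀ ρ : ℕ → V, (∀ k, ρ k ∈ U) → (∃ j, ρ j ∈ T) → G.winner ρ = p)
    (hσ : G.MLValid σ) (hσU : Set.MapsTo σ U U) (hσA : G.IsAttrStrategy p U T σ)
    (hf : G.SolvedBy (U \ G.attr p U T) f) :
    G.SolvedBy U fun q => (U \ G.attr p U T).piecewise (f q) σ := by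
  set A := G.attr p U T
  have hmaps : ∀ q, Set.MapsTo ((U \ A).piecewise (f q) σ) (U \ A) (U \ A) := fun q v hv => by
    rw [Set.piecewise_eq_of_mem _ _ _ hv]
    exact hf.mapsTo q hv
  have hattr : G.IsAttrStrategy p U T ((U \ A).piecewise (f p) σ) := fun v hv => by
    rw [Set.piecewise_eq_of_notMem _ _ _ fun h => h.2 hv]
    exact hσA v hv
  refine ⟨fun q v => ?_, fun q v hv => ?_, fun v hv => ?_⟩
  · by_cases h : v ∈ U \ A
    · simpa [Set.piecewise_eq_of_mem _ _ _ h] using hf.valid q v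
    · simpa [Set.piecewise_eq_of_notMem _ _ _ h] using hσ v
  · by_cases h : v ∈ U \ A
    · exact (hmaps q h).1
    · simpa [Set.piecewise_eq_of_notMem _ _ _ h] using hσU hv
  by_cases hvA : v ∈ A
  · exact ⟨p, fun ρ hρ hρU hcons => hT ρ hρU (hattr.exists_mem hρ.2 hρU hcons (hρ.1 ▸ hvA))⟩
  obtain ⟨q, hq⟩ := hf.winsFrom v ⟨hv, hvA⟩
  refine ⟨q, fun ρ hρ hρU hcons => ?_⟩
  by_cases hqp : q = p
  · subst hqp
    by_cases hA : ∃ k, ρ k ∈ A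
    · obtain ⟨k, hk⟩ := hA
      exact hT ρ hρU (hattr.exists_mem hρ.2 hρU hcons hk)
    · have hstay : ∀ k, ρ k ∈ U \ A := fun k => ⟨hρU k, fun hk => hA ⟨k, hk⟩⟩
      exact hq ρ hρ hstay (hcons.of_piecewise hstay)
  · have hstay := forall_mem_diff_attr hqp (hmaps q) hρ.2 hρU (hρ.1 ▸ ⟨hv, hvA⟩) hcons
    exact hq ρ hρ hstay (hcons.of_piecewise hstay)

theorem exists_solvedBy_of_lt [Finite V] (n : ℕ) :
    ∀ U, G.NoDeadEnds U → (∀ v ∈ U, G.c v < n) → ∃ f, G.SolvedBy U f := by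
  induction n with
  | zero =>
    intro U _ hc
    refine ⟨fun _ v => (G.total v).choose, ⟨fun _ v => (G.total v).choose_spec, ?_, ?_⟩⟩
    · exact fun _ v hv => absurd (hc v hv) (Nat.not_lt_zero _)
    · exact fun v hv => absurd (hc v hv) (Nat.not_lt_zero _)
  | succ n ih =>
    intro U hU hc
    set p := decide (Even n)
    set T := {v | G.c v = n}
    obtain ⟨σ, hσ, hσU, hσA⟩ := exists_attrStrategy (G := G) (p := p) (T := T) hU
    have hc' : ∀ v ∈ U \ G.attr p U T, G.c v < n := fun v hv =>
      lt_of_le_of_ne (Nat.le_of_lt_succ (hc v hv.1)) fun h => hv.2 (mem_attr h hv.1)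
    obtain ⟨f, hf⟩ := ih _ hU.diff_attr hc'
    have hT : ∀ ρ : ℕ → V, (∀ k, ρ k ∈ U) → (∃ j, ρ j ∈ T) → G.winner ρ = p := by
      rintro ρ hρU ⟨j, hj⟩
      have hmax : G.maxColor ρ = n := maxColor_eq (fun k => Nat.le_of_lt_succ (hc _ (hρU k))) hj
      simp only [winner, Wins1, hmax, p]
    exact ⟨_, hf.piecewise_attr hT hσ hσU hσA⟩

theorem exists_solvedBy [Finite V] {U : Set V} (hU : G.NoDeadEnds U) : ∃ f, G.SolvedBy U f := by
  obtain ⟨M, hM⟩ := (Set.finite_range G.c).bddAbove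
  exact exists_solvedBy_of_lt (M + 1) U hU fun v _ => Nat.lt_succ_of_le (hM ⟨v, rfl⟩)

end WPGame

/-- In a qualitative two-player zero-sum weak parity game, from every vertex
one of the two players has a memoryless winning strategy (in particular, the
game is determined). -/
theorem weak_parity_memoryless_determinacy
    {V : Type} [Fintype V] (G : WPGame V) (v : V) :
    (∃ f : V → V, G.MLValid f ∧
        ∀ ρ : ℕ → V, G.IsPlay v ρ → G.ConsistentML true f ρ → G.Wins1 ρ) ∨
    (∃ f : V → V, G.MLValid f ∧
        ∀ ρ : ℕ → V, G.IsPlay v ρ → G.ConsistentML false f ρ → ¬ G.Wins1 ρ) := by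
  obtain ⟨f, hf⟩ := G.exists_solvedBy (U := Set.univ) fun v _ =>
    (G.total v).imp fun _ hE => ⟨hE, trivial⟩
  obtain ⟨q, hq⟩ := hf.winsFrom v trivial
  cases q
  · exact Or.inr ⟨f false, hf.valid false, fun ρ hρ hcons => by
      simpa [WPGame.winner] using hq ρ hρ (fun _ => trivial) hcons⟩
  · exact Or.inl ⟨f true, hf.valid true, fun ρ hρ hcons => by
      simpa [WPGame.winner] using hq ρ hρ (fun _ => trivial) hcons⟩
end

section
/- Let (σ_i)_{i∈Π} be a secure equilibrium in a multiplayer quantitative reachability game (G, v₀), with outcome ρ; let D = max{Cost_i(ρ) : i ∈ Π, Cost_i(ρ) < +∞} + |V|. Then (σ_i) is dev-optimal if and only if for every player j ∈ Π and every strategy σ'_j of player j, writing ρ' = ⟨σ'_j, σ_{-j}⟩_{v₀}, if (1) Cost_j(ρ) = Cost_j(ρ'), (2) for all i ∈ Π with Cost_i(ρ) < +∞ one has Cost_i(ρ) ≤ Cost_i(ρ'), and (3) there exists i ∈ Π with Cost_i(ρ) < Cost_i(ρ'), then there exists l ∈ Π such that Cost_l(ρ) = +∞ and Cost_l(ρ')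 < D. -/
open scoped Classical ENat

/-- The preference relation `≺_j` of player `j` on cost profiles:
`x ≺_j y` iff `x j > y j`, or `x j = y j`, every player's cost does not
decrease, and some player's cost strictly increases. -/
def Prec {ι : Type} (j : ι) (x y : ι → ℕ∞) : Prop :=
  y j < x j ∨ (x j = y j ∧ (∀ i, x i ≤ y i) ∧ ∃ i, x i < y i)

namespace QRGame

variable {ι V : Type} [DecidableEq ι]

/-- `σ` restricted after the history `h` is a secure equilibrium in the subgame
`(G|_h, cur h)`: no player `j` has a `≺_j`-profitable deviation after `h`
(costs are computed on the whole play, including the prefix `h`). -/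
def IsSecureAfter (G : QRGame ι V) (v₀ : V) (σ : ι → List V → V) (h : List V) : Prop :=
  ¬ ∃ (j : ι) (σ' : List V → V), G.IsStrat v₀ j σ' ∧
      Prec j (fun i => G.cost i (G.fullPlay v₀ σ h))
        (fun i => G.cost i (G.fullPlay v₀ (Function.update σ j σ') h))

/-- A secure equilibrium in `(G, v₀)`. -/
def IsSecure (G : QRGame ι V) (v₀ : V) (σ : ι → List V → V) : Prop :=
  G.IsSecureAfter v₀ σ [v₀]

/-- A subgame perfect secure equilibrium: a secure equilibrium in every subgame. -/
def IsSPSE (G : QRGame ι V) (v₀ : V) (σ : ι → List V → V) : Prop :=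
  ∀ h : List V, G.IsHist v₀ h → G.IsSecureAfter v₀ σ h

end QRGame

namespace QRGame

variable {ι V : Type} [Fintype V]

/-- A strategy profile with outcome `ρ` is goal-optimal (with bound `Γ`) if
every goal set visited by `ρ` is visited before depth `Γ`. -/
noncomputable def GoalOpt (G : QRGame ι V) (v₀ : V) (σ : ι → List V → V) (Γ : ℕ) : Prop :=
  ∀ i, G.cost i (G.outcome v₀ σ) ≠ ⊤ → G.cost i (G.outcome v₀ σ) < (Γ : ℕ∞)

/-- The bound `D = max{Cost_i(ρ) : Cost_i(ρ) < +∞} + |V|` attached to a play `ρ`. -/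
noncomputable def devBound (G : QRGame ι V) (ρ : ℕ → V) : ℕ :=
  (⨆ i ∈ {i : ι | G.cost i ρ ≠ ⊤}, G.cost i ρ).toNat + Fintype.card V

variable [DecidableEq ι]

/-- A secure equilibrium with outcome `ρ` is dev-optimal if for every player
`j` and deviation `σ'_j` (with resulting play `ρ'`), the cost profile of the
prefix `ρ_{<D}` is not `≺_j` the cost profile of the prefix `ρ'_{<D}`, where
`D = max{Cost_i(ρ) : Cost_i(ρ) < +∞} + |V|`. -/
noncomputable def DevOpt (G : QRGame ι V) (v₀ : V) (σ : ι → List V → V) : Prop :=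
  ∀ (j : ι) (σ' : List V → V), G.IsStrat v₀ j σ' →
    ¬ Prec j
        (fun i => G.costLT i (G.outcome v₀ σ) (G.devBound (G.outcome v₀ σ)))
        (fun i => G.costLT i (G.outcome v₀ (Function.update σ j σ'))
          (G.devBound (G.outcome v₀ σ)))

end QRGame

/-! Every finite cost of the outcome `ρ` is below `D`, so cutting `ρ` at `D` does not change its
cost profile, while cutting a deviation `ρ'` at `D` turns exactly its costs `≥ D` into `+∞`.
Security already gives `Cost_j(ρ) ≤ Cost_j(ρ')`, so a `≺_j`-improvement on the prefixes is
the same as an improvement of the shape (1)–(3) on the full plays in which no player with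
`Cost_l(ρ) = +∞` has `Cost_l(ρ') < D`. -/

namespace QRGame

variable {ι V : Type}

theorem costLT_eq_ite (G : QRGame ι V) (i : ι) (ρ : ℕ → V) (m : ℕ) :
    G.costLT i ρ m = if G.cost i ρ < m then G.cost i ρ else ⊤ := by
  unfold costLT
  split_ifs with h
  · obtain ⟨l₀, hl₀, hl₀m⟩ : ∃ l ∈ {l : ℕ | ρ l ∈ G.F i}, l < m := by
      simpa [cost, iInf_lt_iff] using h
    refine le_antisymm (le_iInf₂ fun l hl => ?_) (biInf_mono fun l hl => hl.2)
    by_cases hlm : l < m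
    · exact iInf₂_le l ⟨hlm, hl⟩
    · have : l₀ ≤ l := (hl₀m.trans_le (not_lt.mp hlm)).le
      exact (iInf₂_le l₀ ⟨hl₀m, hl₀⟩).trans (by exact_mod_cast this)
  · refine eq_top_iff.mpr (le_iInf₂ fun l hl => absurd ?_ h)
    exact (iInf₂_le l hl.2).trans_lt (by exact_mod_cast hl.1)

theorem cost_lt_devBound [Finite ι] [Fintype V] [Nonempty V] (G : QRGame ι V) (ρ : ℕ → V)
    {i : ι} (hi : G.cost i ρ ≠ ⊤) : G.cost i ρ < G.devBound ρ := by
  set M := ⨆ k ∈ {k : ι | G.cost k ρ ≠ ⊤}, G.cost k ρ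
  have hM : M ≠ ⊤ := iSup_ne_top fun k => iSup_ne_top fun hk => hk
  calc G.cost i ρ ≤ (M.toNat : ℕ∞) := by
        rw [ENat.natCast_toNat hM]
        exact le_iSup₂ (f := fun k (_ : G.cost k ρ ≠ ⊤) => G.cost k ρ) i hi
    _ < G.devBound ρ := by
        unfold devBound
        exact_mod_cast Nat.lt_add_of_pos_right Fintype.card_pos

end QRGame

theorem prec_truncate_iff {ι : Type} {j : ι} {x y : ι → ℕ∞} {D : ℕ}
    (hx : ∀ i, x i ≠ ⊤ → x i < D) (hxy : x j ≤ y j) :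
    Prec j (fun i => if x i < D then x i else ⊤) (fun i => if y i < D then y i else ⊤) ↔
      (x j = y j ∧ (∀ i, x i ≠ ⊤ → x i ≤ y i) ∧ ∃ i, x i < y i) ∧
        ∀ l, x l = ⊤ → ¬ y l < D := by
  have hx' : (fun i => if x i < D then x i else ⊤) = x := funext fun i => by
    split_ifs with h
    · rfl
    · by_contra hne
      exact h (hx i (Ne.symm hne))
  rw [hx']
  have hy : ∀ i, y i ≤ if y i < D then y i else ⊤ := fun i => by split_ifs <;> simp
  have hD : ∀ i, x i ≠ ⊤ → ¬ y i < D → x i < y i := fun i hi h =>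
    (hx i hi).trans_le (not_lt.mp h)
  constructor
  · rintro (hlt | ⟨hj, hle, i₀, hi₀⟩)
    · exact absurd (hxy.trans (hy j)) (not_le.mpr hlt)
    refine ⟨⟨le_antisymm hxy (hj ▸ hy j), fun i hi => ?_, i₀, ?_⟩, fun l hl hlD => ?_⟩
    · by_cases h : y i < D
      · simpa [h] using hle i
      · exact (hD i hi h).le
    · by_cases h : y i₀ < D
      · simpa [h] using hi₀
      · exact hD i₀ (ne_top_of_lt hi₀) h
    · have h : x l ≤ if y l < D then y l else ⊤ := hle l
      rw [if_pos hlD, hl, top_le_iff] at h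
      exact not_top_lt (h ▸ hlD)
  · rintro ⟨⟨hj, hle, i₀, hi₀⟩, hfin⟩
    refine Or.inr ⟨?_, fun i => ?_, i₀, hi₀.trans_le (hy i₀)⟩
    · show x j = if y j < D then y j else ⊤
      split_ifs with h
      · exact hj
      · by_contra hne
        exact h (hj ▸ hx j hne)
    · by_cases hi : x i = ⊤
      · simp [hi, hfin i hi]
      · exact (hle i hi).trans (hy i)

namespace QRGame

variable {ι V : Type} [DecidableEq ι]

theorem IsSecure.cost_le_deviation {G : QRGame ι V} {v₀ : V} {σ : ι → List V → V}
    (hsec : G.IsSecure v₀ σ) {j : ι} {σ' : List V → V} (hσ' : G.IsStrat v₀ j σ') :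
    G.cost j (G.outcome v₀ σ) ≤ G.cost j (G.outcome v₀ (Function.update σ j σ')) :=
  not_lt.mp fun h => hsec ⟨j, σ', hσ', Or.inl h⟩

end QRGame

theorem devopt_characterization_general
    {ι V : Type} [Fintype ι] [Fintype V] [DecidableEq ι]
    (G : QRGame ι V) (v₀ : V) (σ : ι → List V → V)
    (hsec : G.IsSecure v₀ σ) :
    G.DevOpt v₀ σ ↔
      ∀ (j : ι) (σ' : List V → V), G.IsStrat v₀ j σ' →
        (G.cost j (G.outcome v₀ σ)
            = G.cost j (G.outcome v₀ (Function.update σ j σ')) ∧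
          (∀ i, G.cost i (G.outcome v₀ σ) ≠ ⊤ →
            G.cost i (G.outcome v₀ σ)
              ≤ G.cost i (G.outcome v₀ (Function.update σ j σ'))) ∧
          ∃ i, G.cost i (G.outcome v₀ σ)
              < G.cost i (G.outcome v₀ (Function.update σ j σ'))) →
        ∃ l, G.cost l (G.outcome v₀ σ) = ⊤ ∧
          G.cost l (G.outcome v₀ (Function.update σ j σ'))
            < (G.devBound (G.outcome v₀ σ) : ℕ∞) := by
  have : Nonempty V := ⟨v₀⟩
  simp only [QRGame.DevOpt, QRGame.costLT_eq_ite]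
  refine forall₃_congr fun j σ' hσ' => ?_
  refine (not_congr (prec_truncate_iff (fun i => G.cost_lt_devBound (i := i) _)
    (hsec.cost_le_deviation hσ'))).trans ?_
  simp only [not_and, not_forall, not_not, exists_prop]

/-- Characterization of dev-optimality: a secure equilibrium `σ` with outcome
`ρ` is dev-optimal iff for every player `j` and every deviation `σ'_j` with
resulting play `ρ'`, whenever (1) `Cost_j(ρ) = Cost_j(ρ')`, (2) every finite
cost does not decrease, and (3) some cost strictly increases, there is a player
`l` with `Cost_l(ρ) = +∞` and `Cost_l(ρ') < D`, where
`D = max{Cost_i(ρ) : Cost_i(ρ) < +∞} + |V|`. -/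
theorem devopt_characterization
    {ι V : Type} [Fintype ι] [Fintype V] [DecidableEq ι]
    (G : QRGame ι V) (v₀ : V) (σ : ι → List V → V)
    (hprof : G.IsProfile v₀ σ) (hsec : G.IsSecure v₀ σ) :
    G.DevOpt v₀ σ ↔
      ∀ (j : ι) (σ' : List V → V), G.IsStrat v₀ j σ' →
        (G.cost j (G.outcome v₀ σ)
            = G.cost j (G.outcome v₀ (Function.update σ j σ')) ∧
          (∀ i, G.cost i (G.outcome v₀ σ) ≠ ⊤ →
            G.cost i (G.outcome v₀ σ)
              ≤ G.cost i (G.outcome v₀ (Function.update σ j σ'))) ∧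
          ∃ i, G.cost i (G.outcome v₀ σ)
              < G.cost i (G.outcome v₀ (Function.update σ j σ'))) →
        ∃ l, G.cost l (G.outcome v₀ σ) = ⊤ ∧
          G.cost l (G.outcome v₀ (Function.update σ j σ'))
            < (G.devBound (G.outcome v₀ σ) : ℕ∞) :=
  devopt_characterization_general G v₀ σ hsec
end
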